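/- arXiv:2603.01728 — 5 statements merged into one kernel-verified Lean document; each statement's English description precedes it below -/
import Mathlib

section
/- Let X, Y2 be Hilbert spaces, A2 : Y2 → X bounded linear, and ξ ∈ X with ξ ∉ range(A2). Define η_α := (A2 A2* + α I)⁻¹ ξ for α > 0. Then ⟨ξ, η_α⟩ → ∞ as α → 0+. -/
open ContinuousLinearMap Filter
open scoped InnerProductSpace Topology

/-- If `ξ` is approximated by images of a bounded set under `A2`, then `ξ ∈ range A2`.
(Elementary Hilbert-space replacement for weak compactness of balls.) -/
lemma exists_eq_of_approx_image {X Y2 : Type*}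
    [NormedAddCommGroup X] [InnerProductSpace ℝ X]
    [NormedAddCommGroup Y2] [InnerProductSpace ℝ Y2] [CompleteSpace Y2]
    (A2 : Y2 →L[ℝ] X) (ξ : X) (R : ℝ)
    (h : ∀ ε : ℝ, 0 < ε → ∃ v : Y2, ‖v‖ ≤ R ∧ ‖A2 v - ξ‖ ≤ ε) :
    ∃ v : Y2, A2 v = ξ := by
  set C : ℕ → Set Y2 := fun n => {v | ‖v‖ ≤ R ∧ ‖A2 v - ξ‖ ≤ 1 / ((n : ℝ) + 1)} with hCdef
  have hne : ∀ n, (C n).Nonempty := by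
    intro n
    obtain ⟨v, hv1, hv2⟩ := h (1 / ((n : ℝ) + 1)) (by positivity)
    exact ⟨v, hv1, hv2⟩
  have hconv : ∀ n, Convex ℝ (C n) := by
    intro n v hv w hw a b ha hb hab
    constructor
    · calc ‖a • v + b • w‖ ≤ a * ‖v‖ + b * ‖w‖ := by
            refine (norm_add_le _ _).trans ?_
            rw [norm_smul, norm_smul, Real.norm_of_nonneg ha, Real.norm_of_nonneg hb]
        _ ≤ a * R + b * R :=
            add_le_add (mul_le_mul_of_nonneg_left hv.1 ha)
              (mul_le_mul_of_nonneg_left hw.1 hb)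
        _ = R := by rw [← add_mul, hab, one_mul]
    · have key : A2 (a • v + b • w) - ξ = a • (A2 v - ξ) + b • (A2 w - ξ) := by
        rw [map_add, map_smul, map_smul, smul_sub, smul_sub]
        have : (a + b) • ξ = ξ := by rw [hab, one_smul]
        rw [add_smul] at this
        rw [show a • (A2 v) - a • ξ + (b • (A2 w) - b • ξ)
              = a • (A2 v) + b • (A2 w) - (a • ξ + b • ξ) by abel, this]
      calc ‖A2 (a • v + b • w) - ξ‖ = ‖a • (A2 v - ξ) + b • (A2 w - ξ)‖ := by rw [key]
        _ ≤ a * ‖A2 v - ξ‖ + b * ‖A2 w - ξ‖ := by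
            refine (norm_add_le _ _).trans ?_
            rw [norm_smul, norm_smul, Real.norm_of_nonneg ha, Real.norm_of_nonneg hb]
        _ ≤ a * (1 / ((n : ℝ) + 1)) + b * (1 / ((n : ℝ) + 1)) :=
            add_le_add (mul_le_mul_of_nonneg_left hv.2 ha)
              (mul_le_mul_of_nonneg_left hw.2 hb)
        _ = 1 / ((n : ℝ) + 1) := by rw [← add_mul, hab, one_mul]
  have hclosed : ∀ n, IsClosed (C n) := by
    intro n
    have h1 : IsClosed {v : Y2 | ‖v‖ ≤ R} := isClosed_le continuous_norm continuous_const
    have h2 : IsClosed {v : Y2 | ‖A2 v - ξ‖ ≤ 1 / ((n : ℝ) + 1)} :=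
      isClosed_le ((A2.continuous.sub continuous_const).norm) continuous_const
    exact h1.inter h2
  have hanti : ∀ m n : ℕ, m ≤ n → C n ⊆ C m := by
    intro m n hmn v hv
    refine ⟨hv.1, hv.2.trans ?_⟩
    apply one_div_le_one_div_of_le (by positivity)
    have : (m : ℝ) ≤ n := Nat.cast_le.mpr hmn
    linarith
  have hmin : ∀ n, ∃ x ∈ C n, ‖(0 : Y2) - x‖ = ⨅ w : C n, ‖(0 : Y2) - w‖ := fun n =>
    exists_norm_eq_iInf_of_complete_convex (hne n) (hclosed n).isComplete (hconv n) 0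
  choose x hxC hxd using hmin
  set d : ℕ → ℝ := fun n => ⨅ w : C n, ‖(0 : Y2) - w‖ with hddef
  have hbdd : ∀ n, BddBelow (Set.range fun w : C n => ‖(0 : Y2) - w‖) := by
    intro n
    exact ⟨0, by rintro r ⟨w, rfl⟩; exact norm_nonneg _⟩
  have hxnorm : ∀ n, ‖x n‖ = d n := by
    intro n
    have := hxd n
    rwa [zero_sub, norm_neg] at this
  have hd_nonneg : ∀ n, 0 ≤ d n := fun n => (norm_nonneg (x n)).trans_eq (hxnorm n)
  have hdR : ∀ n, d n ≤ R := fun n => (hxnorm n).symm.trans_le (hxC n).1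
  have hdmono : Monotone d := by
    intro m n hmn
    have hx_in : x n ∈ C m := hanti m n hmn (hxC n)
    have : d m ≤ ‖(0 : Y2) - (⟨x n, hx_in⟩ : C m)‖ := ciInf_le (hbdd m) _
    calc d m ≤ ‖(0 : Y2) - x n‖ := this
      _ = d n := hxd n
  set D : ℝ := ⨆ n, d n with hDdef
  have hbddAbove : BddAbove (Set.range d) := ⟨R, by rintro r ⟨n, rfl⟩; exact hdR n⟩
  have hdD : Tendsto d atTop (𝓝 D) := tendsto_atTop_ciSup hdmono hbddAbove
  have hdleD : ∀ n, d n ≤ D := fun n => le_ciSup hbddAbove n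
  -- the minimal-norm points form a Cauchy sequence
  have hcauchy : CauchySeq x := by
    rw [Metric.cauchySeq_iff]
    intro ε hε
    have hsq : Tendsto (fun n => 4 * (D ^ 2 - d n ^ 2)) atTop (𝓝 0) := by
      have h1 : Tendsto (fun n => d n ^ 2) atTop (𝓝 (D ^ 2)) := hdD.pow 2
      have h2 : Tendsto (fun n => 4 * (D ^ 2 - d n ^ 2)) atTop (𝓝 (4 * (D ^ 2 - D ^ 2))) :=
        (tendsto_const_nhds.sub h1).const_mul 4
      simpa using h2
    have hev : ∀ᶠ n in atTop, 4 * (D ^ 2 - d n ^ 2) < ε ^ 2 := by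
      apply hsq.eventually_lt_const
      positivity
    obtain ⟨N, hN⟩ := eventually_atTop.mp hev
    refine ⟨N, fun m hm n hn => ?_⟩
    set k := min m n with hk
    have hxmC : x m ∈ C k := hanti k m (min_le_left m n) (hxC m)
    have hxnC : x n ∈ C k := hanti k n (min_le_right m n) (hxC n)
    have hmid : (1/2 : ℝ) • x m + (1/2 : ℝ) • x n ∈ C k :=
      hconv k hxmC hxnC (by norm_num) (by norm_num) (by norm_num)
    have hdk : d k ≤ ‖(1/2 : ℝ) • x m + (1/2 : ℝ) • x n‖ := by
      have := ciInf_le (hbdd k) (⟨_, hmid⟩ : C k)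
      rwa [zero_sub, norm_neg] at this
    have hsum : ‖x m + x n‖ = 2 * ‖(1/2 : ℝ) • x m + (1/2 : ℝ) • x n‖ := by
      rw [show (1/2 : ℝ) • x m + (1/2 : ℝ) • x n = (1/2 : ℝ) • (x m + x n) by
        rw [smul_add], norm_smul]
      simp [Real.norm_of_nonneg]
      try ring
    have hNk : N ≤ k := le_min hm hn
    have hdNk : d N ≤ d k := hdmono hNk
    have hpar := parallelogram_law_with_norm ℝ (x m) (x n)
    have hsum_ge : 2 * d N ≤ ‖x m + x n‖ := by
      rw [hsum]
      have := hdNk.trans hdk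
      linarith
    have hsq1 : (2 * d N) * (2 * d N) ≤ ‖x m + x n‖ * ‖x m + x n‖ :=
      mul_self_le_mul_self (by have := hd_nonneg N; linarith) hsum_ge
    have hdist : ‖x m - x n‖ * ‖x m - x n‖ ≤ 4 * (D ^ 2 - d N ^ 2) := by
      have e1 : ‖x m‖ = d m := hxnorm m
      have e2 : ‖x n‖ = d n := hxnorm n
      have hm' : d m ≤ D := hdleD m
      have hn' : d n ≤ D := hdleD n
      nlinarith [hd_nonneg m, hd_nonneg n]
    rw [dist_eq_norm]
    nlinarith [norm_nonneg (x m - x n), hN N le_rfl]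
  obtain ⟨v, hv⟩ := cauchySeq_tendsto_of_complete hcauchy
  have hvC : ∀ n, v ∈ C n := by
    intro n
    refine (hclosed n).mem_of_tendsto hv (eventually_atTop.2 ⟨n, fun k hk => ?_⟩)
    exact hanti n k hk (hxC k)
  have hle : ‖A2 v - ξ‖ ≤ 0 :=
    ge_of_tendsto' tendsto_one_div_add_atTop_nhds_zero_nat (fun n => (hvC n).2)
  exact ⟨v, by rwa [← sub_eq_zero, ← norm_le_zero_iff]⟩

/-- If `ξ ∉ range A₂` and `η_α = (A₂A₂* + αI)⁻¹ ξ`, then `⟨ξ, η_α⟩ → ∞` as `α → 0⁺`. -/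
theorem tikhonov_resolvent_inner_tendsto_atTop
    {X Y2 : Type*}
    [NormedAddCommGroup X] [InnerProductSpace ℝ X] [CompleteSpace X]
    [NormedAddCommGroup Y2] [InnerProductSpace ℝ Y2] [CompleteSpace Y2]
    (A2 : Y2 →L[ℝ] X) (ξ : X) (hξ : ξ ∉ Set.range A2) (η : ℝ → X)
    (hη : ∀ α : ℝ, 0 < α →
      (A2 ∘L adjoint A2 + α • (1 : X →L[ℝ] X)) (η α) = ξ) :
    Tendsto (fun α => ⟪ξ, η α⟫_ℝ) (𝓝[>] (0 : ℝ)) atTop := by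
  -- rewrite the defining equation pointwise
  have hη' : ∀ α : ℝ, 0 < α → A2 (adjoint A2 (η α)) + α • η α = ξ := by
    intro α hα
    have := hη α hα
    simpa [ContinuousLinearMap.add_apply, ContinuousLinearMap.comp_apply,
      ContinuousLinearMap.smul_apply, ContinuousLinearMap.one_apply] using this
  -- value formula : ⟪ξ, η α⟫ = ‖A₂* η α‖² + α ‖η α‖²
  have hval : ∀ α : ℝ, 0 < α →
      ⟪ξ, η α⟫_ℝ = ‖adjoint A2 (η α)‖ ^ 2 + α * ‖η α‖ ^ 2 := by
    intro α hα
    rw [← hη' α hα, inner_add_left, real_inner_smul_left,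
      ← adjoint_inner_right A2, real_inner_self_eq_norm_sq, real_inner_self_eq_norm_sq]
  -- cross positivity : ⟪η α, η β⟫ ≥ 0
  have hcross : ∀ α β : ℝ, 0 < α → 0 < β → 0 ≤ ⟪η α, η β⟫_ℝ := by
    intro α β hα hβ
    have h1 := hη' α hα
    have h2 := hη' β hβ
    have hsub : A2 (adjoint A2 (η α - η β)) = β • η β - α • η α := by
      rw [map_sub, map_sub, eq_sub_of_add_eq h1, eq_sub_of_add_eq h2]
      abel
    have hpos : 0 ≤ ⟪A2 (adjoint A2 (η α - η β)), η α - η β⟫_ℝ := by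
      rw [← adjoint_inner_right A2]
      exact real_inner_self_nonneg
    rw [hsub, inner_sub_left, inner_sub_right, inner_sub_right,
      real_inner_smul_left, real_inner_smul_left, real_inner_smul_left,
      real_inner_smul_left] at hpos
    have hc : ⟪η β, η α⟫_ℝ = ⟪η α, η β⟫_ℝ := real_inner_comm _ _
    have hu : 0 ≤ ⟪η α, η α⟫_ℝ := real_inner_self_nonneg
    have hw : 0 ≤ ⟪η β, η β⟫_ℝ := real_inner_self_nonneg
    nlinarith
  -- antitonicity of α ↦ ⟪ξ, η α⟫ : for 0 < α ≤ β, ⟪ξ, η β⟫ ≤ ⟪ξ, η α⟫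
  have hanti : ∀ α β : ℝ, 0 < α → 0 < β → α ≤ β → ⟪ξ, η β⟫_ℝ ≤ ⟪ξ, η α⟫_ℝ := by
    intro α β hα hβ hab
    have h1 := hη' α hα
    have h2 := hη' β hβ
    have e1 : ⟪ξ, η α⟫_ℝ
        = ⟪adjoint A2 (η β), adjoint A2 (η α)⟫_ℝ + β * ⟪η β, η α⟫_ℝ := by
      rw [← h2, inner_add_left, real_inner_smul_left, ← adjoint_inner_right A2]
    have e2 : ⟪ξ, η β⟫_ℝ
        = ⟪adjoint A2 (η α), adjoint A2 (η β)⟫_ℝ + α * ⟪η α, η β⟫_ℝ := by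
      rw [← h1, inner_add_left, real_inner_smul_left, ← adjoint_inner_right A2]
    have hc1 : ⟪adjoint A2 (η β), adjoint A2 (η α)⟫_ℝ
        = ⟪adjoint A2 (η α), adjoint A2 (η β)⟫_ℝ := real_inner_comm _ _
    have hc2 : ⟪η β, η α⟫_ℝ = ⟪η α, η β⟫_ℝ := real_inner_comm _ _
    have hx := hcross α β hα hβ
    nlinarith
  by_contra hcon
  rw [tendsto_atTop] at hcon
  push_neg at hcon
  obtain ⟨b, hb⟩ := hcon
  -- the bound holds for all α > 0 by antitonicity
  have hball : ∀ α : ℝ, 0 < α → ⟪ξ, η α⟫_ℝ < b := by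
    intro α hα
    have hmem : ∀ᶠ t in 𝓝[>] (0 : ℝ), t ∈ Set.Ioo (0 : ℝ) α :=
      eventually_of_mem (Ioo_mem_nhdsGT hα) (fun t ht => ht)
    obtain ⟨t, htb, ht⟩ := (hb.and_eventually hmem).exists
    exact lt_of_le_of_lt (hanti t α ht.1 hα (le_of_lt ht.2)) htb
  have hb_pos : 0 < b := by
    have h1 := hball 1 one_pos
    have h2 := hval 1 one_pos
    nlinarith [sq_nonneg ‖adjoint A2 (η 1)‖, sq_nonneg ‖η 1‖]
  -- extract approximate preimages with bounded norm
  have happrox : ∀ ε : ℝ, 0 < ε → ∃ v : Y2, ‖v‖ ≤ Real.sqrt b ∧ ‖A2 v - ξ‖ ≤ ε := by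
    intro ε hε
    set α := ε ^ 2 / b with hαdef
    have hα : 0 < α := by positivity
    refine ⟨adjoint A2 (η α), ?_, ?_⟩
    · have h1 : ‖adjoint A2 (η α)‖ ^ 2 ≤ b := by
        have := hval α hα
        have := hball α hα
        nlinarith [sq_nonneg ‖η α‖]
      calc ‖adjoint A2 (η α)‖ = Real.sqrt (‖adjoint A2 (η α)‖ ^ 2) := by
            rw [Real.sqrt_sq (norm_nonneg _)]
        _ ≤ Real.sqrt b := Real.sqrt_le_sqrt h1
    · have heq : A2 (adjoint A2 (η α)) - ξ = -(α • η α) := by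
        rw [eq_sub_of_add_eq (hη' α hα)]
        abel
      rw [heq, norm_neg, norm_smul, Real.norm_of_nonneg hα.le]
      have h1 : α * ‖η α‖ ^ 2 ≤ b := by
        have := hval α hα
        have := hball α hα
        nlinarith [sq_nonneg ‖adjoint A2 (η α)‖]
      have h2 : (α * ‖η α‖) ^ 2 ≤ ε ^ 2 := by
        have : (α * ‖η α‖) ^ 2 = α * (α * ‖η α‖ ^ 2) := by ring
        rw [this, hαdef]
        calc ε ^ 2 / b * (ε ^ 2 / b * ‖η α‖ ^ 2) ≤ ε ^ 2 / b * b := by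
              apply mul_le_mul_of_nonneg_left _ (by positivity)
              rw [← hαdef]; exact h1
          _ = ε ^ 2 := by field_simp
      nlinarith [mul_nonneg hα.le (norm_nonneg (η α))]
  obtain ⟨v, hv⟩ := exists_eq_of_approx_image A2 ξ (Real.sqrt b) happrox
  exact hξ ⟨v, hv⟩
end

section
/- Let X, Y2 be Hilbert spaces, A2 : Y2 → X bounded linear, ξ ∈ X with ξ ∉ range(A2). For α > 0 set η_α := (A2 A2* + α I)⁻¹ ξ and ξ_α := η_α / ⟨ξ, η_α⟩^{3/4}. Then ‖A2* ξ_α‖ ≤ ⟨ξ, η_α⟩^{-1/4}, and hence A2* ξ_α → 0 as α → 0+. -/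
open ContinuousLinearMap Filter Set
open scoped InnerProductSpace Topology

/-!
Put `f α = ⟪ξ, η_α⟫ = ‖A* η_α‖² + α ‖η_α‖²`. Since `‖A* η_α‖² ≤ f α`, normalising by
`f α ^ (3/4)` leaves at most `f α ^ (-1/4)`, so it suffices that `f α → ∞` as `α → 0⁺`.
For `α ≤ β` one has
`f α - f β = (β - α) ‖η_β‖² + ‖A* η_α - A* η_β‖² + α ‖η_α - η_β‖²`,
so `f` is antitone, and if it were bounded, `A* η_α` would be Cauchy as `α → 0⁺`. Its limit `w`
would satisfy `A w = lim (ξ - α η_α) = ξ`, because `‖α η_α‖² ≤ α f α → 0`; but `ξ ∉ range A`.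
-/

theorem cauchy_map_of_dist_sq_le {ι M : Type*} [PseudoMetricSpace M] {l : Filter ι} {x : ι → M}
    {g : ι → ℝ} (hg : Cauchy (l.map g)) {s : Set ι} (hs : s ∈ l)
    (h : ∀ a ∈ s, ∀ b ∈ s, dist (x a) (x b) ^ 2 ≤ dist (g a) (g b)) : Cauchy (l.map x) := by
  rw [Metric.cauchy_iff] at hg ⊢
  refine ⟨hg.1.of_map.map x, fun ε hε => ?_⟩
  obtain ⟨t, ht, hgt⟩ := hg.2 (ε ^ 2) (by positivity)
  obtain ⟨u, hu, hut⟩ := mem_map_iff_exists_image.1 ht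
  refine ⟨x '' (u ∩ s), image_mem_map (inter_mem hu hs), ?_⟩
  rintro _ ⟨a, ⟨hau, has⟩, rfl⟩ _ ⟨b, ⟨hbu, hbs⟩, rfl⟩
  have hab : dist (x a) (x b) ^ 2 < ε ^ 2 :=
    (h a has b hbs).trans_lt (hgt _ (hut ⟨a, hau, rfl⟩) _ (hut ⟨b, hbu, rfl⟩))
  exact (pow_lt_pow_iff_left₀ dist_nonneg hε.le two_ne_zero).1 hab

section Tikhonov

variable {X Y : Type*} [NormedAddCommGroup X] [InnerProductSpace ℝ X] [CompleteSpace X]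
  [NormedAddCommGroup Y] [InnerProductSpace ℝ Y] [CompleteSpace Y]

def IsTikhonovSolution (A : Y →L[ℝ] X) (ξ : X) (α : ℝ) (η : X) : Prop :=
  A (adjoint A η) + α • η = ξ

variable {A : Y →L[ℝ] X} {ξ η η' : X} {α β : ℝ}

namespace IsTikhonovSolution

theorem inner_eq (h : IsTikhonovSolution A ξ α η) (v : X) :
    ⟪ξ, v⟫_ℝ = ⟪adjoint A η, adjoint A v⟫_ℝ + α * ⟪η, v⟫_ℝ := by
  rw [← h, inner_add_left, real_inner_smul_left, ← adjoint_inner_right]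

theorem inner_self_eq (h : IsTikhonovSolution A ξ α η) :
    ⟪ξ, η⟫_ℝ = ‖adjoint A η‖ ^ 2 + α * ‖η‖ ^ 2 := by
  rw [h.inner_eq, real_inner_self_eq_norm_sq, real_inner_self_eq_norm_sq]

theorem inner_sub_inner (h : IsTikhonovSolution A ξ α η) (h' : IsTikhonovSolution A ξ β η') :
    ⟪ξ, η⟫_ℝ - ⟪ξ, η'⟫_ℝ =
      (β - α) * ‖η'‖ ^ 2 + ‖adjoint A η - adjoint A η'‖ ^ 2 + α * ‖η - η'‖ ^ 2 := by
  rw [norm_sub_sq_real, norm_sub_sq_real]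
  linear_combination h.inner_self_eq - 2 * h.inner_eq η' + h'.inner_self_eq

theorem norm_adjoint_sub_sq_le (h : IsTikhonovSolution A ξ α η)
    (h' : IsTikhonovSolution A ξ β η') (hα : 0 ≤ α) (hαβ : α ≤ β) :
    ‖adjoint A η - adjoint A η'‖ ^ 2 ≤ ⟪ξ, η⟫_ℝ - ⟪ξ, η'⟫_ℝ := by
  rw [h.inner_sub_inner h']
  nlinarith [mul_nonneg (sub_nonneg.2 hαβ) (sq_nonneg ‖η'‖), mul_nonneg hα (sq_nonneg ‖η - η'‖)]

theorem inner_le_inner (h : IsTikhonovSolution A ξ α η) (h' : IsTikhonovSolution A ξ β η')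
    (hα : 0 ≤ α) (hαβ : α ≤ β) : ⟪ξ, η'⟫_ℝ ≤ ⟪ξ, η⟫_ℝ := by
  linarith [h.norm_adjoint_sub_sq_le h' hα hαβ, sq_nonneg ‖adjoint A η - adjoint A η'‖]

theorem norm_adjoint_sq_le (h : IsTikhonovSolution A ξ α η) (hα : 0 ≤ α) :
    ‖adjoint A η‖ ^ 2 ≤ ⟪ξ, η⟫_ℝ := by
  rw [h.inner_self_eq]
  nlinarith [mul_nonneg hα (sq_nonneg ‖η‖)]

theorem norm_smul_sq_le (h : IsTikhonovSolution A ξ α η) (hα : 0 ≤ α) :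
    ‖α • η‖ ^ 2 ≤ α * ⟪ξ, η⟫_ℝ := by
  rw [h.inner_self_eq, norm_smul, Real.norm_of_nonneg hα]
  nlinarith [mul_nonneg hα (sq_nonneg ‖adjoint A η‖)]

theorem inner_pos (h : IsTikhonovSolution A ξ α η) (hα : 0 < α) (hξ : ξ ≠ 0) :
    0 < ⟪ξ, η⟫_ℝ := by
  have hη : η ≠ 0 := by
    rintro rfl
    exact hξ (by simpa [IsTikhonovSolution] using h.symm)
  rw [h.inner_self_eq]
  have := norm_pos_iff.2 hη
  positivity

theorem norm_adjoint_normalized_le (h : IsTikhonovSolution A ξ α η) (hα : 0 < α) (hξ : ξ ≠ 0) :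
    ‖adjoint A ((⟪ξ, η⟫_ℝ ^ ((3 : ℝ) / 4))⁻¹ • η)‖ ≤ ⟪ξ, η⟫_ℝ ^ (-(1 : ℝ) / 4) := by
  have hpos := h.inner_pos hα hξ
  have hsqrt : ‖adjoint A η‖ ≤ ⟪ξ, η⟫_ℝ ^ ((1 : ℝ) / 2) := by
    rw [← Real.sqrt_eq_rpow]
    exact Real.le_sqrt_of_sq_le (h.norm_adjoint_sq_le hα.le)
  calc ‖adjoint A ((⟪ξ, η⟫_ℝ ^ ((3 : ℝ) / 4))⁻¹ • η)‖
      = (⟪ξ, η⟫_ℝ ^ ((3 : ℝ) / 4))⁻¹ * ‖adjoint A η‖ := by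
        rw [map_smul, norm_smul, Real.norm_of_nonneg (by positivity)]
    _ ≤ (⟪ξ, η⟫_ℝ ^ ((3 : ℝ) / 4))⁻¹ * ⟪ξ, η⟫_ℝ ^ ((1 : ℝ) / 2) := by gcongr
    _ = ⟪ξ, η⟫_ℝ ^ (-(1 : ℝ) / 4) := by
        rw [← Real.rpow_neg hpos.le, ← Real.rpow_add hpos]
        norm_num

end IsTikhonovSolution

variable {η : ℝ → X}

theorem antitoneOn_inner_tikhonov (hη : ∀ α, 0 < α → IsTikhonovSolution A ξ α (η α)) :
    AntitoneOn (fun α => ⟪ξ, η α⟫_ℝ) (Ioi 0) := fun _ hα _ hβ hαβ =>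
  (hη _ hα).inner_le_inner (hη _ hβ) (le_of_lt hα) hαβ

theorem mem_range_of_bddAbove_inner_tikhonov
    (hη : ∀ α, 0 < α → IsTikhonovSolution A ξ α (η α))
    (hbdd : BddAbove ((fun α => ⟪ξ, η α⟫_ℝ) '' Ioi 0)) : ξ ∈ range A := by
  obtain ⟨M, hM⟩ := hbdd
  have hlim := (antitoneOn_inner_tikhonov hη).tendsto_nhdsGT ⟨M, hM⟩
  have hcauchy : Cauchy ((𝓝[>] (0 : ℝ)).map fun α => adjoint A (η α)) := by
    refine cauchy_map_of_dist_sq_le hlim.cauchy_map self_mem_nhdsWithin fun α hα β hβ => ?_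
    rw [dist_eq_norm, Real.dist_eq]
    rcases le_total α β with hαβ | hβα
    · exact ((hη α hα).norm_adjoint_sub_sq_le (hη β hβ) (le_of_lt hα) hαβ).trans (le_abs_self _)
    · rw [norm_sub_rev, abs_sub_comm]
      exact ((hη β hβ).norm_adjoint_sub_sq_le (hη α hα) (le_of_lt hβ) hβα).trans (le_abs_self _)
  obtain ⟨w, hw⟩ := cauchy_map_iff_exists_tendsto.1 hcauchy
  have hsmul : Tendsto (fun α => α • η α) (𝓝[>] 0) (𝓝 0) := by
    have hsqrt : Tendsto (fun α => √(α * M)) (𝓝[>] 0) (𝓝 0) := by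
      simpa using ((continuous_id.mul continuous_const).sqrt.tendsto (0 : ℝ)).mono_left
        nhdsWithin_le_nhds
    refine squeeze_zero_norm' ?_ hsqrt
    filter_upwards [self_mem_nhdsWithin] with α (hα : 0 < α)
    refine Real.le_sqrt_of_sq_le ((hη α hα).norm_smul_sq_le hα.le |>.trans ?_)
    exact mul_le_mul_of_nonneg_left (hM ⟨α, hα, rfl⟩) hα.le
  have hAw : Tendsto (fun α => A (adjoint A (η α))) (𝓝[>] 0) (𝓝 ξ) := by
    have hsub : Tendsto (fun α => ξ - α • η α) (𝓝[>] 0) (𝓝 ξ) := by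
      simpa using tendsto_const_nhds.sub hsmul
    refine hsub.congr' ?_
    filter_upwards [self_mem_nhdsWithin] with α (hα : 0 < α)
    exact (eq_sub_of_add_eq (hη α hα)).symm
  exact ⟨w, tendsto_nhds_unique ((A.continuous.tendsto w).comp hw) hAw⟩

theorem tendsto_inner_tikhonov_atTop (hη : ∀ α, 0 < α → IsTikhonovSolution A ξ α (η α))
    (hξ : ξ ∉ range A) : Tendsto (fun α => ⟪ξ, η α⟫_ℝ) (𝓝[>] 0) atTop := by
  refine tendsto_atTop.2 fun M => ?_
  obtain ⟨_, ⟨α₀, hα₀, rfl⟩, hM⟩ :=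
    not_bddAbove_iff.1 (mt (mem_range_of_bddAbove_inner_tikhonov hη) hξ) M
  filter_upwards [Ioo_mem_nhdsGT hα₀] with α hα
  exact hM.le.trans (antitoneOn_inner_tikhonov hη hα.1 hα₀ hα.2.le)

end Tikhonov

/-- With `η_α = (A₂A₂* + αI)⁻¹ ξ` and `ξ_α = η_α / ⟨ξ, η_α⟩^(3/4)`, one has
`‖A₂* ξ_α‖ ≤ ⟨ξ, η_α⟩^(-1/4)`, and hence `A₂* ξ_α → 0` as `α → 0⁺` when `ξ ∉ range A₂`. -/
theorem tikhonov_normalized_adjoint_small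
    {X Y2 : Type*}
    [NormedAddCommGroup X] [InnerProductSpace ℝ X] [CompleteSpace X]
    [NormedAddCommGroup Y2] [InnerProductSpace ℝ Y2] [CompleteSpace Y2]
    (A2 : Y2 →L[ℝ] X) (ξ : X) (hξ : ξ ∉ Set.range A2) (η : ℝ → X)
    (hη : ∀ α : ℝ, 0 < α →
      (A2 ∘L adjoint A2 + α • (1 : X →L[ℝ] X)) (η α) = ξ)
    (ξa : ℝ → X)
    (hξa : ∀ α : ℝ, 0 < α → ξa α = (⟪ξ, η α⟫_ℝ ^ ((3 : ℝ) / 4))⁻¹ • η α) :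
    (∀ α : ℝ, 0 < α → ‖adjoint A2 (ξa α)‖ ≤ ⟪ξ, η α⟫_ℝ ^ (-(1 : ℝ) / 4)) ∧
      Tendsto (fun α => adjoint A2 (ξa α)) (𝓝[>] (0 : ℝ)) (𝓝 0) := by
  have hsol : ∀ α, 0 < α → IsTikhonovSolution A2 ξ α (η α) := fun α hα => by
    simpa [IsTikhonovSolution] using hη α hα
  have hξ₀ : ξ ≠ 0 := fun h => hξ ⟨0, by simp [h]⟩
  have hbound : ∀ α : ℝ, 0 < α → ‖adjoint A2 (ξa α)‖ ≤ ⟪ξ, η α⟫_ℝ ^ (-(1 : ℝ) / 4) :=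
    fun α hα => hξa α hα ▸ (hsol α hα).norm_adjoint_normalized_le hα hξ₀
  have hdecay : Tendsto (fun α => ⟪ξ, η α⟫_ℝ ^ (-(1 : ℝ) / 4)) (𝓝[>] 0) (𝓝 0) := by
    simpa [Function.comp_def, neg_div] using
      (tendsto_rpow_neg_atTop (by norm_num : (0 : ℝ) < 1 / 4)).comp
        (tendsto_inner_tikhonov_atTop hsol hξ)
  refine ⟨hbound, squeeze_zero_norm' ?_ hdecay⟩
  filter_upwards [self_mem_nhdsWithin] with α hα using hbound α hα
end

section
/- Let X, Y1, Y2 be Hilbert spaces, A1 : Y1 → X and A2 : Y2 → X bounded linear operators, and ξ ∈ X with ξ ∈ range(A1) but ξ ∉ range(A2). For α > 0 set η_α := (A2 A2* + α I)⁻¹ ξ and ξ_α := η_α / ⟨ξ, η_α⟩^{3/4}. Then ‖A1* ξ_α‖ → ∞ and ‖A2* ξ_α‖ → 0 as α → 0+. -/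
open ContinuousLinearMap Filter
open scoped InnerProductSpace Topology

/-!
Put `φ(α) = ⟪ξ, η_α⟫ = ‖A₂* η_α‖² + α ‖η_α‖²`. Comparing the equations for `η_α` and `η_β` gives
`φ(α) - φ(β) = ‖A₂* η_α - A₂* η_β‖² + α ‖η_α - η_β‖² + (β - α) ‖η_β‖²`, so `φ` is antitone and,
were it bounded, `A₂* η_α` would be Cauchy as `α → 0⁺`; its limit `y` would satisfy `A₂ y = ξ`,
since `‖α η_α‖² ≤ α φ(α) → 0`. Hence `φ(α) → ∞`. Writing `ξ = A₁ v`, we get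
`⟪A₁* ξ_α, v⟫ = ⟪ξ_α, ξ⟫ = φ(α)^(1/4) → ∞`, while
`‖A₂* ξ_α‖ ≤ φ(α)^(-3/4) φ(α)^(1/2) = φ(α)^(-1/4) → 0`.
-/

open Set

theorem CauchySeq.of_dist_sq_le {β E : Type*} [Nonempty β] [SemilatticeSup β]
    [PseudoMetricSpace E] {f : β → E} {g : β → ℝ} (hg : CauchySeq g)
    (h : ∀ m n, dist (f m) (f n) ^ 2 ≤ dist (g m) (g n)) : CauchySeq f := by
  rw [Metric.cauchySeq_iff'] at hg ⊢
  intro ε hε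
  obtain ⟨N, hN⟩ := hg (ε ^ 2) (by positivity)
  exact ⟨N, fun n hn =>
    (pow_lt_pow_iff_left₀ dist_nonneg hε.le two_ne_zero).1 ((h n N).trans_lt (hN n hn))⟩

theorem AntitoneOn.tendsto_nhdsGT_atTop {f : ℝ → ℝ} {a : ℝ} (hf : AntitoneOn f (Ioi a))
    (hbdd : ¬BddAbove (f '' Ioi a)) : Tendsto f (𝓝[>] a) atTop := by
  rw [tendsto_atTop]
  intro C
  obtain ⟨_, ⟨x, hx, rfl⟩, hCx⟩ := not_bddAbove_iff.1 hbdd C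
  filter_upwards [Ioo_mem_nhdsGT hx] with y hy
  exact hCx.le.trans (hf hy.1 hx hy.2.le)

theorem inv_rpow_three_fourths_mul_self {p : ℝ} (hp : 0 < p) :
    (p ^ (3 / 4 : ℝ))⁻¹ * p = p ^ (1 / 4 : ℝ) := by
  rw [← Real.rpow_neg hp.le, ← Real.rpow_add_one hp.ne']
  norm_num

theorem inv_rpow_three_fourths_mul_sqrt {p : ℝ} (hp : 0 < p) :
    (p ^ (3 / 4 : ℝ))⁻¹ * √p = (p ^ (1 / 4 : ℝ))⁻¹ := by
  rw [Real.sqrt_eq_rpow, ← Real.rpow_neg hp.le, ← Real.rpow_neg hp.le, ← Real.rpow_add hp]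
  norm_num

theorem tendsto_norm_adjoint_atTop_of_tendsto_inner {ι X Y : Type*}
    [NormedAddCommGroup X] [InnerProductSpace ℝ X] [CompleteSpace X]
    [NormedAddCommGroup Y] [InnerProductSpace ℝ Y] [CompleteSpace Y]
    {l : Filter ι} {A : Y →L[ℝ] X} {x : ι → X} (v : Y)
    (h : Tendsto (fun i => ⟪x i, A v⟫_ℝ) l atTop) :
    Tendsto (fun i => ‖adjoint A (x i)‖) l atTop := by
  have hv : (0 : ℝ) < ‖v‖ + 1 := by positivity
  refine tendsto_atTop_mono (fun i => ?_) (h.atTop_div_const hv)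
  rw [div_le_iff₀ hv, ← adjoint_inner_left]
  calc ⟪adjoint A (x i), v⟫_ℝ ≤ ‖adjoint A (x i)‖ * ‖v‖ := real_inner_le_norm _ _
    _ ≤ ‖adjoint A (x i)‖ * (‖v‖ + 1) := by gcongr; linarith

section Regularization

variable {X Y : Type*} [NormedAddCommGroup X] [InnerProductSpace ℝ X] [CompleteSpace X]
  [NormedAddCommGroup Y] [InnerProductSpace ℝ Y] [CompleteSpace Y] {A : Y →L[ℝ] X} {ξ : X}

theorem inner_eq_of_regularized {α : ℝ} {u : X} (hu : A (adjoint A u) + α • u = ξ) (x : X) :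
    ⟪ξ, x⟫_ℝ = ⟪adjoint A u, adjoint A x⟫_ℝ + α * ⟪u, x⟫_ℝ := by
  rw [← hu, inner_add_left, real_inner_smul_left, ← adjoint_inner_right, adjoint_inner_left]

theorem inner_self_eq_of_regularized {α : ℝ} {u : X} (hu : A (adjoint A u) + α • u = ξ) :
    ⟪ξ, u⟫_ℝ = ‖adjoint A u‖ ^ 2 + α * ‖u‖ ^ 2 := by
  rw [inner_eq_of_regularized hu, real_inner_self_eq_norm_sq, real_inner_self_eq_norm_sq]

theorem norm_adjoint_le_sqrt_inner_of_regularized {α : ℝ} {u : X} (hα : 0 ≤ α)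
    (hu : A (adjoint A u) + α • u = ξ) : ‖adjoint A u‖ ≤ √⟪ξ, u⟫_ℝ := by
  refine Real.le_sqrt_of_sq_le ?_
  rw [inner_self_eq_of_regularized hu]
  nlinarith [sq_nonneg ‖u‖]

theorem norm_smul_sq_le_of_regularized {α : ℝ} {u : X} (hα : 0 ≤ α)
    (hu : A (adjoint A u) + α • u = ξ) : ‖α • u‖ ^ 2 ≤ α * ⟪ξ, u⟫_ℝ := by
  rw [inner_self_eq_of_regularized hu, norm_smul, Real.norm_of_nonneg hα]
  nlinarith [sq_nonneg ‖adjoint A u‖]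

theorem inner_sub_inner_eq_of_regularized {α β : ℝ} {u v : X}
    (hu : A (adjoint A u) + α • u = ξ) (hv : A (adjoint A v) + β • v = ξ) :
    ⟪ξ, u⟫_ℝ - ⟪ξ, v⟫_ℝ =
      ‖adjoint A u - adjoint A v‖ ^ 2 + α * ‖u - v‖ ^ 2 + (β - α) * ‖v‖ ^ 2 := by
  rw [inner_self_eq_of_regularized hu, norm_sub_sq_real, norm_sub_sq_real]
  linear_combination inner_self_eq_of_regularized hv - 2 * inner_eq_of_regularized hu v

theorem norm_adjoint_sub_sq_le_of_regularized {α β : ℝ} {u v : X} (hα : 0 ≤ α) (hαβ : α ≤ β)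
    (hu : A (adjoint A u) + α • u = ξ) (hv : A (adjoint A v) + β • v = ξ) :
    ‖adjoint A u - adjoint A v‖ ^ 2 ≤ ⟪ξ, u⟫_ℝ - ⟪ξ, v⟫_ℝ := by
  rw [inner_sub_inner_eq_of_regularized hu hv]
  have := mul_nonneg hα (sq_nonneg ‖u - v‖)
  have := mul_nonneg (sub_nonneg.2 hαβ) (sq_nonneg ‖v‖)
  linarith

variable {η : ℝ → X} (hη : ∀ α, 0 < α → A (adjoint A (η α)) + α • η α = ξ)
include hη

theorem antitoneOn_inner_of_regularized : AntitoneOn (fun α => ⟪ξ, η α⟫_ℝ) (Ioi 0) :=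
  fun α hα β hβ hαβ => sub_nonneg.1 <| (sq_nonneg _).trans <|
    norm_adjoint_sub_sq_le_of_regularized hα.le hαβ (hη α hα) (hη β hβ)

theorem norm_adjoint_sub_sq_le_abs_of_regularized {α β : ℝ} (hα : 0 < α) (hβ : 0 < β) :
    ‖adjoint A (η α) - adjoint A (η β)‖ ^ 2 ≤ |⟪ξ, η α⟫_ℝ - ⟪ξ, η β⟫_ℝ| := by
  wlog hαβ : α ≤ β generalizing α β
  · rw [norm_sub_rev, abs_sub_comm]
    exact this hβ hα (le_of_not_ge hαβ)
  exact (norm_adjoint_sub_sq_le_of_regularized hα.le hαβ (hη α hα) (hη β hβ)).trans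
    (le_abs_self _)

theorem mem_range_of_bddAbove_inner_of_regularized
    (hbdd : BddAbove ((fun α => ⟪ξ, η α⟫_ℝ) '' Ioi 0)) : ξ ∈ range A := by
  obtain ⟨C, hC⟩ := hbdd
  have hC' : ∀ α, 0 < α → ⟪ξ, η α⟫_ℝ ≤ C := fun α hα => hC ⟨α, hα, rfl⟩
  set a : ℕ → ℝ := fun n => 1 / (n + 1)
  have ha : ∀ n, 0 < a n := fun n => Nat.one_div_pos_of_nat
  have hφ : CauchySeq (fun n => ⟪ξ, η (a n)⟫_ℝ) := by
    refine (tendsto_atTop_ciSup (fun m n hmn => ?_) ?_).cauchySeq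
    · exact antitoneOn_inner_of_regularized hη (ha n) (ha m) (Nat.one_div_le_one_div hmn)
    · exact ⟨C, by rintro _ ⟨n, rfl⟩; exact hC' _ (ha n)⟩
  have hw : CauchySeq (fun n => adjoint A (η (a n))) := hφ.of_dist_sq_le fun m n => by
    rw [dist_eq_norm, Real.dist_eq]
    exact norm_adjoint_sub_sq_le_abs_of_regularized hη (ha m) (ha n)
  obtain ⟨y, hy⟩ := cauchySeq_tendsto_of_complete hw
  have hsmall : Tendsto (fun n => a n • η (a n)) atTop (𝓝 0) := by
    have hlim := (tendsto_one_div_add_atTop_nhds_zero_nat.mul_const C).sqrt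
    rw [zero_mul, Real.sqrt_zero] at hlim
    refine squeeze_zero_norm (fun n => Real.le_sqrt_of_sq_le ?_) hlim
    exact (norm_smul_sq_le_of_regularized (ha n).le (hη _ (ha n))).trans
      (mul_le_mul_of_nonneg_left (hC' _ (ha n)) (ha n).le)
  refine ⟨y, tendsto_nhds_unique ((A.continuous.tendsto y).comp hy) ?_⟩
  have hAw : (A ∘ fun n => adjoint A (η (a n))) = fun n => ξ - a n • η (a n) :=
    funext fun n => eq_sub_of_add_eq (hη _ (ha n))
  simpa [hAw] using tendsto_const_nhds.sub hsmall

theorem tendsto_inner_atTop_of_regularized (hξ : ξ ∉ range A) :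
    Tendsto (fun α => ⟪ξ, η α⟫_ℝ) (𝓝[>] 0) atTop :=
  (antitoneOn_inner_of_regularized hη).tendsto_nhdsGT_atTop fun hbdd =>
    hξ (mem_range_of_bddAbove_inner_of_regularized hη hbdd)

end Regularization

/-- Lemma A.2 of the paper: for `ξ ∈ range A₁ \ range A₂`, the normalized regularized
elements `ξ_α = η_α / ⟨ξ, η_α⟩^(3/4)` with `η_α = (A₂A₂* + αI)⁻¹ ξ` satisfy
`‖A₁* ξ_α‖ → ∞` and `A₂* ξ_α → 0` as `α → 0⁺`. -/
theorem localized_sequence_construction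
    {X Y1 Y2 : Type*}
    [NormedAddCommGroup X] [InnerProductSpace ℝ X] [CompleteSpace X]
    [NormedAddCommGroup Y1] [InnerProductSpace ℝ Y1] [CompleteSpace Y1]
    [NormedAddCommGroup Y2] [InnerProductSpace ℝ Y2] [CompleteSpace Y2]
    (A1 : Y1 →L[ℝ] X) (A2 : Y2 →L[ℝ] X) (ξ : X)
    (hξ1 : ξ ∈ Set.range A1) (hξ2 : ξ ∉ Set.range A2) (η : ℝ → X)
    (hη : ∀ α : ℝ, 0 < α →
      (A2 ∘L adjoint A2 + α • (1 : X →L[ℝ] X)) (η α) = ξ)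
    (ξa : ℝ → X)
    (hξa : ∀ α : ℝ, 0 < α → ξa α = (⟪ξ, η α⟫_ℝ ^ ((3 : ℝ) / 4))⁻¹ • η α) :
    Tendsto (fun α => ‖adjoint A1 (ξa α)‖) (𝓝[>] (0 : ℝ)) atTop ∧
      Tendsto (fun α => ‖adjoint A2 (ξa α)‖) (𝓝[>] (0 : ℝ)) (𝓝 0) := by
  have hη' : ∀ α, 0 < α → A2 (adjoint A2 (η α)) + α • η α = ξ := fun α hα => by
    simpa using hη α hα
  have hφ := tendsto_inner_atTop_of_regularized hη' hξ2
  have hψ := (tendsto_rpow_atTop (by norm_num : (0 : ℝ) < 1 / 4)).comp hφ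
  have hpos : ∀ᶠ α in 𝓝[>] 0, 0 < α ∧ 0 < ⟪ξ, η α⟫_ℝ :=
    eventually_mem_nhdsWithin.and (hφ.eventually_gt_atTop 0)
  obtain ⟨v, rfl⟩ := hξ1
  refine ⟨tendsto_norm_adjoint_atTop_of_tendsto_inner v (hψ.congr' ?_),
    squeeze_zero' (.of_forall fun _ => norm_nonneg _) ?_ hψ.inv_tendsto_atTop⟩
  · filter_upwards [hpos] with α ⟨hα, hp⟩
    rw [hξa α hα, real_inner_smul_left, real_inner_comm (A1 v),
      inv_rpow_three_fourths_mul_self hp]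
    rfl
  · filter_upwards [hpos] with α ⟨hα, hp⟩
    rw [hξa α hα, map_smul, norm_smul, Real.norm_of_nonneg (by positivity)]
    calc _ ≤ (⟪A1 v, η α⟫_ℝ ^ (3 / 4 : ℝ))⁻¹ * √⟪A1 v, η α⟫_ℝ := by
          gcongr
          exact norm_adjoint_le_sqrt_inner_of_regularized hα.le (hη' α hα)
      _ = _ := by rw [inv_rpow_three_fourths_mul_sqrt hp]; norm_num
end

section
/- Let X, Y1, Y2 be Hilbert spaces, A1 : Y1 → X, A2 : Y2 → X bounded linear, ξ = A1 ψ1 with ψ1 ∈ Y1, ψ1 ≠ 0, and let ξ_α := η_α / ⟨ξ, η_α⟩^{3/4} with η_α := (A2 A2* + α I)⁻¹ ξ and ⟨ξ, η_α⟩ > 0. Then ‖A1* ξ_α‖ ≥ ⟨ξ, η_α⟩^{1/4} / ‖ψ1‖. -/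
open ContinuousLinearMap
open scoped InnerProductSpace

/-- Lower bound for `‖A₁* ξ_α‖` via Cauchy–Schwarz: if `ξ = A₁ ψ₁` with `ψ₁ ≠ 0`,
`η_α = (A₂A₂* + αI)⁻¹ ξ` and `ξ_α = η_α / ⟨ξ, η_α⟩^(3/4)`, then
`‖A₁* ξ_α‖ ≥ ⟨ξ, η_α⟩^(1/4) / ‖ψ₁‖`. -/
theorem adjoint_norm_lower_bound
    {X Y1 Y2 : Type*}
    [NormedAddCommGroup X] [InnerProductSpace ℝ X] [CompleteSpace X]
    [NormedAddCommGroup Y1] [InnerProductSpace ℝ Y1] [CompleteSpace Y1]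
    [NormedAddCommGroup Y2] [InnerProductSpace ℝ Y2] [CompleteSpace Y2]
    (A1 : Y1 →L[ℝ] X) (A2 : Y2 →L[ℝ] X)
    (ψ1 : Y1) (hψ1 : ψ1 ≠ 0) (ξ : X) (hξ : ξ = A1 ψ1)
    (α : ℝ) (hα : 0 < α) (η : X)
    (hη : (A2 ∘L adjoint A2 + α • (1 : X →L[ℝ] X)) η = ξ)
    (hpos : 0 < ⟪ξ, η⟫_ℝ)
    (ξa : X) (hξa : ξa = (⟪ξ, η⟫_ℝ ^ ((3 : ℝ) / 4))⁻¹ • η) :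
    ⟪ξ, η⟫_ℝ ^ ((1 : ℝ) / 4) / ‖ψ1‖ ≤ ‖adjoint A1 ξa‖ := by
  set p : ℝ := ⟪ξ, η⟫_ℝ with hp
  have hp0 : p ≠ 0 := ne_of_gt hpos
  have key : ⟪adjoint A1 ξa, ψ1⟫_ℝ = p ^ ((1 : ℝ) / 4) := by
    rw [adjoint_inner_left, ← hξ, hξa, real_inner_smul_left, real_inner_comm, ← hp]
    rw [← Real.rpow_neg_one, ← Real.rpow_mul hpos.le]
    nth_rewrite 2 [← Real.rpow_one p]
    rw [← Real.rpow_add hpos]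
    norm_num
  have cs : ⟪adjoint A1 ξa, ψ1⟫_ℝ ≤ ‖adjoint A1 ξa‖ * ‖ψ1‖ := real_inner_le_norm _ _
  rw [key] at cs
  rw [div_le_iff₀ (norm_pos_iff.mpr hψ1)]
  exact cs
end

section
/- Let X, Y1, Y2 be Hilbert spaces and A1 : Y1 → X, A2 : Y2 → X bounded linear operators with range(A1*) ∩ range(A2*) = {0} and range(A1*) ≠ {0}. Then there exists a sequence {f_k} in X such that ‖A1 f_k‖ → ∞ and ‖A2 f_k‖ → 0 as k → ∞. -/
open ContinuousLinearMap Filter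
open scoped Topology RealInnerProductSpace

/-- Duality lemma: if `⟪ξ, f⟫` is dominated by `C * ‖A f‖`, then `ξ` lies in the
range of the adjoint of `A`. -/
lemma mem_range_adjoint_of_bound
    {X Y : Type*}
    [NormedAddCommGroup X] [InnerProductSpace ℝ X] [CompleteSpace X]
    [NormedAddCommGroup Y] [InnerProductSpace ℝ Y] [CompleteSpace Y]
    (A : X →L[ℝ] Y) (ξ : X) (C : ℝ)
    (h : ∀ f : X, |⟪ξ, f⟫| ≤ C * ‖A f‖) :
    ξ ∈ Set.range (adjoint A) := by
  have hker : LinearMap.ker (A : X →ₗ[ℝ] Y) ≤ LinearMap.ker ((innerSL ℝ ξ) : X →ₗ[ℝ] ℝ) := by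
    intro f hf
    have hf' : A f = 0 := hf
    have := h f
    rw [hf', norm_zero, mul_zero] at this
    have : |⟪ξ, f⟫| = 0 := le_antisymm this (abs_nonneg _)
    simpa [abs_eq_zero] using this
  let e := (A : X →ₗ[ℝ] Y).quotKerEquivRange
  let q : (X ⧸ LinearMap.ker (A : X →ₗ[ℝ] Y)) →ₗ[ℝ] ℝ :=
    (LinearMap.ker (A : X →ₗ[ℝ] Y)).liftQ ((innerSL ℝ ξ) : X →ₗ[ℝ] ℝ) hker
  let L : LinearMap.range (A : X →ₗ[ℝ] Y) →ₗ[ℝ] ℝ := q.comp e.symm.toLinearMap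
  have hL : ∀ f : X, L ⟨A f, LinearMap.mem_range_self _ f⟩ = ⟪ξ, f⟫ := by
    intro f
    have h1 : e ((LinearMap.ker (A : X →ₗ[ℝ] Y)).mkQ f) = ⟨A f, LinearMap.mem_range_self _ f⟩ :=
      Subtype.ext ((A : X →ₗ[ℝ] Y).quotKerEquivRange_apply_mk f)
    have h2 : e.symm ⟨A f, LinearMap.mem_range_self _ f⟩
        = (LinearMap.ker (A : X →ₗ[ℝ] Y)).mkQ f := by
      rw [← h1, LinearEquiv.symm_apply_apply]
    simp only [L, LinearMap.comp_apply, LinearEquiv.coe_toLinearMap, h2]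
    simp [q, Submodule.liftQ_apply]
  have hbound : ∀ y : LinearMap.range (A : X →ₗ[ℝ] Y), ‖L y‖ ≤ C * ‖y‖ := by
    intro y
    obtain ⟨f, hf⟩ := y.2
    have hy : y = ⟨A f, LinearMap.mem_range_self _ f⟩ := Subtype.ext hf.symm
    rw [hy, hL f]
    have hn : ‖(⟨A f, LinearMap.mem_range_self _ f⟩ : LinearMap.range (A : X →ₗ[ℝ] Y))‖ = ‖A f‖ := rfl
    rw [hn]
    simpa using h f
  let Lc : LinearMap.range (A : X →ₗ[ℝ] Y) →L[ℝ] ℝ := LinearMap.mkContinuous L C hbound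
  obtain ⟨g, hg, -⟩ := exists_extension_norm_eq (LinearMap.range (A : X →ₗ[ℝ] Y)) Lc
  refine ⟨(InnerProductSpace.toDual ℝ Y).symm g, ?_⟩
  apply ext_inner_right ℝ
  intro f
  rw [adjoint_inner_left]
  have : ⟪(InnerProductSpace.toDual ℝ Y).symm g, A f⟫ = g (A f) :=
    InnerProductSpace.toDual_symm_apply
  rw [this]
  have := hg ⟨A f, LinearMap.mem_range_self _ f⟩
  simp only [Submodule.coe_mk] at this
  rw [this]
  show Lc _ = _
  rw [LinearMap.mkContinuous_apply, hL]


/-- If the ranges of the adjoints intersect trivially and `range A₁*` is nontrivial,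
then there exists a sequence `f_k` with `‖A₁ f_k‖ → ∞` and `‖A₂ f_k‖ → 0`. -/
theorem localized_sequence_of_trivial_adjoint_range_intersection
    {X Y1 Y2 : Type*}
    [NormedAddCommGroup X] [InnerProductSpace ℝ X] [CompleteSpace X]
    [NormedAddCommGroup Y1] [InnerProductSpace ℝ Y1] [CompleteSpace Y1]
    [NormedAddCommGroup Y2] [InnerProductSpace ℝ Y2] [CompleteSpace Y2]
    (A1 : X →L[ℝ] Y1) (A2 : X →L[ℝ] Y2)
    (hinter : Set.range (adjoint A1) ∩ Set.range (adjoint A2) = {0})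
    (hne : Set.range (adjoint A1) ≠ ({0} : Set X)) :
    ∃ f : ℕ → X,
      Tendsto (fun k => ‖A1 (f k)‖) atTop atTop ∧
        Tendsto (fun k => ‖A2 (f k)‖) atTop (𝓝 0) := by
  -- pick a nonzero ξ in the range of `adjoint A1`
  have hex : ∃ ξ ∈ Set.range (adjoint A1), ξ ≠ 0 := by
    by_contra hcon
    push_neg at hcon
    apply hne
    apply Set.eq_singleton_iff_unique_mem.2
    exact ⟨⟨0, by simp⟩, fun x hx => hcon x hx⟩
  obtain ⟨ξ, ⟨η, hη⟩, hξ0⟩ := hex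
  have hξnot : ξ ∉ Set.range (adjoint A2) := by
    intro hmem
    have : ξ ∈ Set.range (adjoint A1) ∩ Set.range (adjoint A2) := ⟨⟨η, hη⟩, hmem⟩
    rw [hinter] at this
    exact hξ0 this
  have hη0 : η ≠ 0 := by
    rintro rfl
    simp at hη
    exact hξ0 hη.symm
  have hηpos : (0:ℝ) < ‖η‖ := norm_pos_iff.2 hη0
  -- for each n, find g n with (n+1) * ‖A2 (g n)‖ < |⟪ξ, g n⟫|
  have hstep : ∀ n : ℕ, ∃ g : X, ((n:ℝ)+1) * ‖A2 g‖ < |⟪ξ, g⟫| := by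
    intro n
    by_contra hcon
    push_neg at hcon
    exact hξnot (mem_range_adjoint_of_bound A2 ξ ((n:ℝ)+1) hcon)
  choose g hg using hstep
  have hcpos : ∀ n : ℕ, (0:ℝ) < |⟪ξ, g n⟫| := by
    intro n
    refine lt_of_le_of_lt ?_ (hg n)
    positivity
  set f : ℕ → X := fun n => (Real.sqrt ((n:ℝ)+1) / |⟪ξ, g n⟫|) • g n with hf
  have hsqrtpos : ∀ n : ℕ, (0:ℝ) < Real.sqrt ((n:ℝ)+1) := by
    intro n; apply Real.sqrt_pos.2; positivity
  have hinnerf : ∀ n : ℕ, |⟪ξ, f n⟫| = Real.sqrt ((n:ℝ)+1) := by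
    intro n
    rw [hf]
    simp only [real_inner_smul_right, abs_mul]
    rw [abs_div, abs_abs, abs_of_pos (hsqrtpos n), div_mul_eq_mul_div, mul_div_assoc,
      div_self (ne_of_gt (hcpos n)), mul_one]
  have hA2f : ∀ n : ℕ, ‖A2 (f n)‖ ≤ 1 / Real.sqrt ((n:ℝ)+1) := by
    intro n
    rw [hf]
    simp only [map_smul, norm_smul]
    rw [Real.norm_eq_abs, abs_div, abs_abs, abs_of_pos (hsqrtpos n)]
    have h1 : ‖A2 (g n)‖ ≤ |⟪ξ, g n⟫| / ((n:ℝ)+1) := by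
      rw [le_div_iff₀ (by positivity)]
      linarith [hg n, mul_comm ((n:ℝ)+1) ‖A2 (g n)‖]
    calc Real.sqrt ((n:ℝ)+1) / |⟪ξ, g n⟫| * ‖A2 (g n)‖
        ≤ Real.sqrt ((n:ℝ)+1) / |⟪ξ, g n⟫| * (|⟪ξ, g n⟫| / ((n:ℝ)+1)) := by
          apply mul_le_mul_of_nonneg_left h1
          positivity
      _ = Real.sqrt ((n:ℝ)+1) / ((n:ℝ)+1) := by field_simp [ne_of_gt (hcpos n)]
      _ = 1 / Real.sqrt ((n:ℝ)+1) := by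
          rw [eq_div_iff (ne_of_gt (hsqrtpos n)), div_mul_eq_mul_div,
            Real.mul_self_sqrt (by positivity), div_self (by positivity)]
  have hA1f : ∀ n : ℕ, Real.sqrt ((n:ℝ)+1) / ‖η‖ ≤ ‖A1 (f n)‖ := by
    intro n
    have h1 : |⟪ξ, f n⟫| = |⟪η, A1 (f n)⟫| := by
      rw [← hη, adjoint_inner_left]
    have h2 : |⟪η, A1 (f n)⟫| ≤ ‖η‖ * ‖A1 (f n)‖ := abs_real_inner_le_norm _ _
    rw [div_le_iff₀ hηpos]
    rw [hinnerf n] at h1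
    linarith [mul_comm ‖η‖ ‖A1 (f n)‖ ▸ (h1 ▸ h2)]
  have hsq : Tendsto (fun n : ℕ => Real.sqrt ((n:ℝ)+1)) atTop atTop := by
    apply tendsto_atTop_atTop.2
    intro b
    refine ⟨⌈b^2⌉₊, fun a ha => ?_⟩
    rcases le_or_gt b 0 with hb | hb
    · exact hb.trans (Real.sqrt_nonneg _)
    · have h1 : b^2 ≤ (a:ℝ)+1 := by
        have h3 := Nat.le_ceil (b^2)
        have h2 : (⌈b^2⌉₊ : ℝ) ≤ (a : ℝ) := Nat.cast_le.2 ha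
        linarith
      calc b = Real.sqrt (b^2) := (Real.sqrt_sq hb.le).symm
        _ ≤ Real.sqrt ((a:ℝ)+1) := Real.sqrt_le_sqrt h1
  refine ⟨f, ?_, ?_⟩
  · -- ‖A1 (f n)‖ → ∞
    apply tendsto_atTop_mono hA1f
    exact Tendsto.atTop_div_const hηpos hsq
  · -- ‖A2 (f n)‖ → 0
    apply squeeze_zero (fun n => norm_nonneg _) hA2f
    simp only [one_div]
    exact Tendsto.inv_tendsto_atTop hsq
end
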